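/- arXiv:math/0604628 — 10 statements merged into one kernel-verified Lean document; each statement's English description precedes it below -/
import Mathlib

section
/- Let Δ be a finite abstract simplicial complex on a finite vertex set V and let κ : V → {1,…,k} be a surjective map. The following three conditions are equivalent: (i) ‖F_κ ∩ F′_κ‖ = |F ∩ F′| for every pair of facets F, F′ of Δ; (ii) for every pair of facets (F₁, F₂) of Δ there is no pair of vertices (v₁, v₂) with κ(v₁) = κ(v₂) such that v₁ ∈ F₁ \ F₂ and v₂ ∈ F₂ \ F₁; (iii) for every pair of vertices u, v with κ(u) = κ(v), either F(u) ⊆ F(v) or F(v) ⊆ F(u), i.e., for each i ∈ {1,…,k} the set {F(v) : κ(v) = i} is linearly ordered by inclusion. -/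
open Finset Function

variable {V : Type} [Fintype V] [DecidableEq V]

/-- A finite abstract simplicial complex on the vertex set `V`: a collection of
finite subsets of `V` closed under taking subsets, containing every singleton. -/
def IsComplex (Δ : Finset (Finset V)) : Prop :=
  (∀ S ∈ Δ, ∀ T ⊆ S, T ∈ Δ) ∧ ∀ v : V, ({v} : Finset V) ∈ Δ

/-- `F` is a facet of `Δ`, i.e. a face maximal under inclusion. -/
def IsFacet (Δ : Finset (Finset V)) (F : Finset V) : Prop :=
  F ∈ Δ ∧ ∀ G ∈ Δ, F ⊆ G → F = G

/-- `F(v)`: the set of facets of `Δ` containing the vertex `v`. -/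
def facetsOf (Δ : Finset (Finset V)) (v : V) : Set (Finset V) :=
  {F | IsFacet Δ F ∧ v ∈ F}

/-- `S_κ(i)`: the multiplicity of the color `i` in the multiset `S_κ`. -/
def mcount {k : ℕ} (κ : V → Fin k) (S : Finset V) (i : Fin k) : ℕ :=
  (S.filter fun v => κ v = i).card

/-!
Both equivalences hold pair by pair. For fixed finite sets `S`, `T` and a colour `i`,
`S_κ(i) = (S ∩ T)_κ(i) + (S \ T)_κ(i)`, so `min (S_κ(i), T_κ(i))` exceeds `(S ∩ T)_κ(i)`
exactly when both `S \ T` and `T \ S` contain a vertex of colour `i`; summing over the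
colours, `‖S_κ ∩ T_κ‖ ≥ |S ∩ T|` with equality iff no such colour exists. Condition (iii)
fails for `u`, `v` exactly when some facet contains `u` but not `v` and another contains
`v` but not `u`, which is a crossing pair forbidden by (ii).
-/

section Coloring

omit [Fintype V]

variable {k : ℕ} (κ : V → Fin k)

omit [DecidableEq V] in
lemma sum_mcount (S : Finset V) : ∑ i, mcount κ S i = S.card :=
  (card_eq_sum_card_fiberwise fun x _ => mem_univ (κ x)).symm

lemma mcount_inter_add_mcount_sdiff (S T : Finset V) (i : Fin k) :
    mcount κ (S ∩ T) i + mcount κ (S \ T) i = mcount κ S i := by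
  rw [mcount, mcount, mcount, ← card_inter_add_card_sdiff (S.filter fun v => κ v = i) T,
    filter_inter]
  congr 2
  ext v
  simp only [mem_filter, mem_sdiff]
  tauto

omit [DecidableEq V] in
lemma mcount_pos_iff (S : Finset V) (i : Fin k) : 0 < mcount κ S i ↔ ∃ v ∈ S, κ v = i := by
  rw [mcount, card_pos, filter_nonempty_iff]

lemma mcount_inter_lt_iff (S T : Finset V) (i : Fin k) :
    mcount κ (S ∩ T) i < mcount κ S i ↔ ∃ v ∈ S \ T, κ v = i := by
  rw [← mcount_inter_add_mcount_sdiff κ S T i, lt_add_iff_pos_right, mcount_pos_iff]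

lemma mcount_inter_le_min (S T : Finset V) (i : Fin k) :
    mcount κ (S ∩ T) i ≤ min (mcount κ S i) (mcount κ T i) := by
  have hS := mcount_inter_add_mcount_sdiff κ S T i
  have hT := mcount_inter_add_mcount_sdiff κ T S i
  rw [inter_comm] at hT
  omega

lemma mcount_inter_lt_min_iff (S T : Finset V) (i : Fin k) :
    mcount κ (S ∩ T) i < min (mcount κ S i) (mcount κ T i) ↔
      (∃ v ∈ S \ T, κ v = i) ∧ ∃ v ∈ T \ S, κ v = i := by
  rw [lt_min_iff, mcount_inter_lt_iff, inter_comm, mcount_inter_lt_iff]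

theorem sum_min_mcount_eq_card_inter_iff (S T : Finset V) :
    ∑ i, min (mcount κ S i) (mcount κ T i) = (S ∩ T).card ↔
      ¬ ∃ v₁ v₂ : V, κ v₁ = κ v₂ ∧ (v₁ ∈ S ∧ v₁ ∉ T) ∧ (v₂ ∈ T ∧ v₂ ∉ S) := by
  have hle : ∀ i ∈ (univ : Finset (Fin k)),
      mcount κ (S ∩ T) i ≤ min (mcount κ S i) (mcount κ T i) :=
    fun i _ => mcount_inter_le_min κ S T i
  rw [← sum_mcount κ (S ∩ T), eq_comm, sum_eq_sum_iff_of_le hle]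
  constructor
  · rintro hEq ⟨v₁, v₂, hv, ⟨hv₁S, hv₁T⟩, hv₂T, hv₂S⟩
    have hlt := (mcount_inter_lt_min_iff κ S T (κ v₁)).2
      ⟨⟨v₁, mem_sdiff.2 ⟨hv₁S, hv₁T⟩, rfl⟩, ⟨v₂, mem_sdiff.2 ⟨hv₂T, hv₂S⟩, hv.symm⟩⟩
    exact hlt.ne (hEq _ (mem_univ _))
  · intro hno i hi
    refine (hle i hi).eq_of_not_lt fun hlt => hno ?_
    obtain ⟨⟨v₁, hv₁, rfl⟩, v₂, hv₂, hv⟩ := (mcount_inter_lt_min_iff κ S T i).1 hlt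
    exact ⟨v₁, v₂, hv.symm, mem_sdiff.1 hv₁, mem_sdiff.1 hv₂⟩

end Coloring

omit [Fintype V] [DecidableEq V] in
theorem forall_not_exists_crossing_iff {α : Type*} (κ : V → α) (P : Finset V → Prop) :
    (∀ F₁ F₂ : Finset V, P F₁ → P F₂ →
        ¬ ∃ v₁ v₂ : V, κ v₁ = κ v₂ ∧ (v₁ ∈ F₁ ∧ v₁ ∉ F₂) ∧ (v₂ ∈ F₂ ∧ v₂ ∉ F₁)) ↔
      ∀ u v : V, κ u = κ v →
        {F | P F ∧ u ∈ F} ⊆ {F | P F ∧ v ∈ F} ∨ {F | P F ∧ v ∈ F} ⊆ {F | P F ∧ u ∈ F} := by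
  constructor
  · intro hno u v huv
    by_contra! ⟨hu, hv⟩
    obtain ⟨F₁, ⟨hF₁, huF₁⟩, hvF₁⟩ := Set.not_subset.1 hu
    obtain ⟨F₂, ⟨hF₂, hvF₂⟩, huF₂⟩ := Set.not_subset.1 hv
    exact hno F₁ F₂ hF₁ hF₂
      ⟨u, v, huv, ⟨huF₁, fun h => huF₂ ⟨hF₂, h⟩⟩, hvF₂, fun h => hvF₁ ⟨hF₁, h⟩⟩
  · rintro hchain F₁ F₂ hF₁ hF₂ ⟨v₁, v₂, hv, ⟨hv₁F₁, hv₁F₂⟩, hv₂F₂, hv₂F₁⟩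
    rcases hchain v₁ v₂ hv with hsub | hsub
    · exact hv₂F₁ (hsub ⟨hF₁, hv₁F₁⟩).2
    · exact hv₁F₂ (hsub ⟨hF₂, hv₂F₂⟩).2

theorem stmt_0_general {k : ℕ} (Δ : Finset (Finset V))
    (κ : V → Fin k) :
    ((∀ F F' : Finset V, IsFacet Δ F → IsFacet Δ F' →
        ∑ i : Fin k, min (mcount κ F i) (mcount κ F' i) = (F ∩ F').card) ↔
      (∀ F₁ F₂ : Finset V, IsFacet Δ F₁ → IsFacet Δ F₂ →
        ¬ ∃ v₁ v₂ : V, κ v₁ = κ v₂ ∧ (v₁ ∈ F₁ ∧ v₁ ∉ F₂) ∧ (v₂ ∈ F₂ ∧ v₂ ∉ F₁)))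
    ∧
    ((∀ F₁ F₂ : Finset V, IsFacet Δ F₁ → IsFacet Δ F₂ →
        ¬ ∃ v₁ v₂ : V, κ v₁ = κ v₂ ∧ (v₁ ∈ F₁ ∧ v₁ ∉ F₂) ∧ (v₂ ∈ F₂ ∧ v₂ ∉ F₁)) ↔
      (∀ u v : V, κ u = κ v →
        facetsOf Δ u ⊆ facetsOf Δ v ∨ facetsOf Δ v ⊆ facetsOf Δ u)) :=
  ⟨forall₄_congr fun F F' _ _ => sum_min_mcount_eq_card_inter_iff κ F F',
    forall_not_exists_crossing_iff κ (IsFacet Δ)⟩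

theorem stmt_0 {k : ℕ} (Δ : Finset (Finset V)) (hΔ : IsComplex Δ)
    (κ : V → Fin k) (hκ : Surjective κ) :
    ((∀ F F' : Finset V, IsFacet Δ F → IsFacet Δ F' →
        ∑ i : Fin k, min (mcount κ F i) (mcount κ F' i) = (F ∩ F').card) ↔
      (∀ F₁ F₂ : Finset V, IsFacet Δ F₁ → IsFacet Δ F₂ →
        ¬ ∃ v₁ v₂ : V, κ v₁ = κ v₂ ∧ (v₁ ∈ F₁ ∧ v₁ ∉ F₂) ∧ (v₂ ∈ F₂ ∧ v₂ ∉ F₁)))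
    ∧
    ((∀ F₁ F₂ : Finset V, IsFacet Δ F₁ → IsFacet Δ F₂ →
        ¬ ∃ v₁ v₂ : V, κ v₁ = κ v₂ ∧ (v₁ ∈ F₁ ∧ v₁ ∉ F₂) ∧ (v₂ ∈ F₂ ∧ v₂ ∉ F₁)) ↔
      (∀ u v : V, κ u = κ v →
        facetsOf Δ u ⊆ facetsOf Δ v ∨ facetsOf Δ v ⊆ facetsOf Δ u)) :=
  stmt_0_general Δ κ
end

section
/- Let Δ be a finite abstract simplicial complex on a finite vertex set V and let κ : V → {1,…,k} be a k-linear coloring of Δ. Then the collection {S_κ : S ∈ Δ} of multisets on {1,…,k} is a multicomplex, i.e., it is closed under taking submultisets: if S ∈ Δ and M′ is a multiset with M′(i) ≤ S_κ(i) for all i, then M′ = S′_κ for some face S′ ∈ Δ. -/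
/-! Inside a face `S`, choose `M' i` vertices of colour `i` for every `i`; their union is a
subset of `S`, hence a face, and it realises `M'`. -/

open Finset Function

variable {V : Type} [Fintype V] [DecidableEq V]

/-- A surjective map `κ : V → {1,…,k}` is a `k`-linear coloring of `Δ` if for every
pair of vertices with the same color the facet sets are comparable by inclusion. -/
def IsLinearColoring {k : ℕ} (Δ : Finset (Finset V)) (κ : V → Fin k) : Prop :=
  Surjective κ ∧
  ∀ u v : V, κ u = κ v →
    facetsOf Δ u ⊆ facetsOf Δ v ∨ facetsOf Δ v ⊆ facetsOf Δ u

section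

omit [Fintype V]

variable {k : ℕ} {κ : V → Fin k}

lemma mcount_biUnion_of_subset_fiber {S : Finset V} {T : Fin k → Finset V}
    (hT : ∀ j, T j ⊆ S.filter fun v => κ v = j) (i : Fin k) :
    mcount κ (univ.biUnion T) i = (T i).card := by
  have hκT : ∀ {j v}, v ∈ T j → κ v = j := fun hv => (mem_filter.mp (hT _ hv)).2
  rw [mcount]
  congr 1
  ext v
  simp only [mem_filter, mem_biUnion, mem_univ, true_and]
  constructor
  · rintro ⟨⟨j, hv⟩, rfl⟩
    rwa [hκT hv]
  · exact fun hv => ⟨⟨i, hv⟩, hκT hv⟩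

lemma exists_subset_mcount_eq (S : Finset V) {M' : Fin k → ℕ}
    (hM' : ∀ i, M' i ≤ mcount κ S i) :
    ∃ S' ⊆ S, ∀ i, mcount κ S' i = M' i := by
  choose T hTS hTcard using fun i => exists_subset_card_eq (hM' i)
  refine ⟨univ.biUnion T, biUnion_subset.mpr fun j _ => (hTS j).trans (filter_subset _ _),
    fun i => ?_⟩
  rw [mcount_biUnion_of_subset_fiber hTS, hTcard]

end

theorem stmt_2_general {k : ℕ} (Δ : Finset (Finset V)) (hΔ : IsComplex Δ)
    (κ : V → Fin k) :
    ∀ S ∈ Δ, ∀ M' : Fin k → ℕ, (∀ i, M' i ≤ mcount κ S i) →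
      ∃ S' ∈ Δ, ∀ i, mcount κ S' i = M' i := by
  intro S hS M' hM'
  obtain ⟨S', hS'S, hS'⟩ := exists_subset_mcount_eq S hM'
  exact ⟨S', hΔ.1 S hS S' hS'S, hS'⟩

/-- The collection `{S_κ : S ∈ Δ}` of multisets on `{1,…,k}` is closed under
taking submultisets, i.e. it is a multicomplex. -/
theorem stmt_2 {k : ℕ} (Δ : Finset (Finset V)) (hΔ : IsComplex Δ)
    (κ : V → Fin k) (hκ : IsLinearColoring Δ κ) :
    ∀ S ∈ Δ, ∀ M' : Fin k → ℕ, (∀ i, M' i ≤ mcount κ S i) →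
      ∃ S' ∈ Δ, ∀ i, mcount κ S' i = M' i :=
  stmt_2_general Δ hΔ κ
end

section
/- Let Γ be a finite multicomplex on {1,…,k} such that for every i ∈ {1,…,k} there is some M ∈ Γ with M(i) ≥ 1. Then there exist a finite abstract simplicial complex Δ on some finite vertex set V and a k-linear coloring κ : V → {1,…,k} of Δ such that Γ = {S_κ : S ∈ Δ}. -/
open Finset Function

variable {V : Type} [Fintype V] [DecidableEq V]

/-
Let `c i` be the largest multiplicity of `i` in `Γ` and take as vertices the pairs `(i, j)` with
`j < c i`, coloured by `i`. Each `M ∈ Γ` becomes the face `{(i, j) | j < M i}`, whose colour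
counts are `M`, and `Δ` is the complex generated by these faces. Colour counts of a face are
bounded by those of a generator containing it, so they stay in the downward-closed `Γ`. Every
generator containing `(i, j)` contains `(i, j')` for `j' ≤ j`; hence `(i, j')` can be added to any
face containing `(i, j)`, so every facet containing `(i, j)` contains `(i, j')`, and the colouring
is linear.
-/

theorem mcount_mono {V : Type} {k : ℕ} (κ : V → Fin k) {S T : Finset V} (h : S ⊆ T)
    (i : Fin k) : mcount κ S i ≤ mcount κ T i :=
  card_le_card (filter_subset_filter _ h)

theorem facetsOf_subset_of_insert_mem {V : Type} [DecidableEq V] {Δ : Finset (Finset V)}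
    {u v : V} (h : ∀ S ∈ Δ, v ∈ S → insert u S ∈ Δ) : facetsOf Δ v ⊆ facetsOf Δ u := by
  rintro F ⟨⟨hF, hmax⟩, hvF⟩
  have hFu : F = insert u F := hmax _ (h F hF hvF) (subset_insert u F)
  exact ⟨⟨hF, hmax⟩, hFu ▸ mem_insert_self u F⟩

section DownClosure

variable {V : Type} [Fintype V] [DecidableEq V]

def downClosure (G : Finset (Finset V)) : Finset (Finset V) :=
  univ.filter fun S => ∃ F ∈ G, S ⊆ F

theorem mem_downClosure {G : Finset (Finset V)} {S : Finset V} :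
    S ∈ downClosure G ↔ ∃ F ∈ G, S ⊆ F := by
  simp [downClosure]

theorem isComplex_downClosure {G : Finset (Finset V)} (hcover : ∀ v, ∃ F ∈ G, v ∈ F) :
    IsComplex (downClosure G) := by
  refine ⟨fun S hS T hTS => ?_, fun v => ?_⟩
  · obtain ⟨F, hF, hSF⟩ := mem_downClosure.1 hS
    exact mem_downClosure.2 ⟨F, hF, hTS.trans hSF⟩
  · obtain ⟨F, hF, hvF⟩ := hcover v
    exact mem_downClosure.2 ⟨F, hF, singleton_subset_iff.2 hvF⟩

theorem facetsOf_downClosure_subset {G : Finset (Finset V)} {u v : V}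
    (h : ∀ F ∈ G, v ∈ F → u ∈ F) : facetsOf (downClosure G) v ⊆ facetsOf (downClosure G) u := by
  refine facetsOf_subset_of_insert_mem fun S hS hvS => ?_
  obtain ⟨F, hF, hSF⟩ := mem_downClosure.1 hS
  exact mem_downClosure.2 ⟨F, hF, insert_subset (h F hF (hSF hvS)) hSF⟩

theorem isLinearColoring_downClosure {k : ℕ} {G : Finset (Finset V)} {κ : V → Fin k}
    (hsurj : Surjective κ)
    (hchain : ∀ u v, κ u = κ v → (∀ F ∈ G, v ∈ F → u ∈ F) ∨ (∀ F ∈ G, u ∈ F → v ∈ F)) :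
    IsLinearColoring (downClosure G) κ := by
  refine ⟨hsurj, fun u v huv => ?_⟩
  rcases hchain u v huv with h | h
  · exact Or.inr (facetsOf_downClosure_subset h)
  · exact Or.inl (facetsOf_downClosure_subset h)

theorem mem_iff_exists_mcount_downClosure {k : ℕ} {Γ : Finset (Fin k → ℕ)}
    (hclosed : ∀ M ∈ Γ, ∀ M' : Fin k → ℕ, (∀ i, M' i ≤ M i) → M' ∈ Γ)
    {κ : V → Fin k} {f : (Fin k → ℕ) → Finset V} (hf : ∀ M ∈ Γ, ∀ i, mcount κ (f M) i = M i)
    (M : Fin k → ℕ) :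
    M ∈ Γ ↔ ∃ S ∈ downClosure (Γ.image f), ∀ i, mcount κ S i = M i := by
  refine ⟨fun hM => ⟨f M, mem_downClosure.2 ⟨f M, mem_image_of_mem f hM, subset_rfl⟩, hf M hM⟩,
    ?_⟩
  rintro ⟨S, hS, hSM⟩
  obtain ⟨_, hF, hSF⟩ := mem_downClosure.1 hS
  obtain ⟨M', hM', rfl⟩ := mem_image.1 hF
  exact hclosed M' hM' M fun i => hSM i ▸ hf M' hM' i ▸ mcount_mono κ hSF i

end DownClosure

section LowerFace

variable {k : ℕ} {c : Fin k → ℕ} {V : Type} [Fintype V]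
  (e : V ≃ Σ i, Fin (c i))

def lowerFace (M : Fin k → ℕ) : Finset V :=
  univ.filter fun v => ((e v).2 : ℕ) < M (e v).1

theorem mem_lowerFace {M : Fin k → ℕ} {v : V} :
    v ∈ lowerFace e M ↔ ((e v).2 : ℕ) < M (e v).1 := by
  simp [lowerFace]

theorem mem_lowerFace_of_le {M : Fin k → ℕ} {u v : V} (hcol : (e u).1 = (e v).1)
    (hle : ((e u).2 : ℕ) ≤ (e v).2) (hv : v ∈ lowerFace e M) : u ∈ lowerFace e M := by
  rw [mem_lowerFace] at hv ⊢
  exact (hle.trans_lt hv).trans_eq (congrArg M hcol.symm)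

theorem mcount_lowerFace {M : Fin k → ℕ} {i : Fin k} (hM : M i ≤ c i) :
    mcount (fun v => (e v).1) (lowerFace e M) i = M i := by
  rw [mcount, ← card_range (M i)]
  refine card_bij (fun v _ => ((e v).2 : ℕ)) ?_ ?_ ?_
  · intro v hv
    obtain ⟨hvM, rfl⟩ := mem_filter.1 hv
    exact mem_range.2 ((mem_lowerFace e).1 hvM)
  · intro v hv w hw hvw
    have hcol : (e v).1 = (e w).1 := (mem_filter.1 hv).2.trans (mem_filter.1 hw).2.symm
    exact e.injective (Sigma.ext hcol ((Fin.heq_ext_iff (congrArg c hcol)).2 hvw))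
  · intro j hj
    have hjc : j < c i := (mem_range.1 hj).trans_le hM
    refine ⟨e.symm ⟨i, j, hjc⟩, mem_filter.2 ⟨(mem_lowerFace e).2 ?_, ?_⟩, ?_⟩ <;>
      rw [Equiv.apply_symm_apply]
    exact mem_range.1 hj

end LowerFace

/-- Every finite multicomplex on `{1,…,k}` in which every color occurs is the
associated multicomplex of some linearly colored simplicial complex. -/
theorem stmt_3 {k : ℕ} (Γ : Finset (Fin k → ℕ))
    (hclosed : ∀ M ∈ Γ, ∀ M' : Fin k → ℕ, (∀ i, M' i ≤ M i) → M' ∈ Γ)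
    (hcolors : ∀ i : Fin k, ∃ M ∈ Γ, 1 ≤ M i) :
    ∃ (n : ℕ) (Δ : Finset (Finset (Fin n))) (κ : Fin n → Fin k),
      IsComplex Δ ∧ IsLinearColoring Δ κ ∧
      ∀ M : Fin k → ℕ, M ∈ Γ ↔ ∃ S ∈ Δ, ∀ i, mcount κ S i = M i := by
  let c : Fin k → ℕ := fun i => Γ.sup (· i)
  have hle : ∀ M ∈ Γ, ∀ i, M i ≤ c i := fun M hM i => le_sup (f := (· i)) hM
  let e := (Fintype.equivFin (Σ i, Fin (c i))).symm
  refine ⟨_, downClosure (Γ.image (lowerFace e)), fun v => (e v).1, ?_, ?_,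
    mem_iff_exists_mcount_downClosure hclosed fun M hM i => mcount_lowerFace e (hle M hM i)⟩
  · refine isComplex_downClosure fun v => ?_
    obtain ⟨M, hM, hv⟩ := Finset.lt_sup_iff.1 (e v).2.2
    exact ⟨_, mem_image_of_mem _ hM, (mem_lowerFace e).2 hv⟩
  · refine isLinearColoring_downClosure (fun i => ?_) fun u v huv => ?_
    · obtain ⟨M, hM, hMi⟩ := hcolors i
      exact ⟨e.symm ⟨i, 0, hMi.trans (hle M hM i)⟩, by simp⟩
    simp only [forall_mem_image]
    rcases le_total ((e u).2 : ℕ) (e v).2 with h | h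
    · exact Or.inl fun M _ => mem_lowerFace_of_le e huv h
    · exact Or.inr fun M _ => mem_lowerFace_of_le e huv.symm h
end

section
/- Let Δ be a finite abstract simplicial complex on a finite vertex set V and let κ : V → {1,…,k} be a k-linear coloring of Δ. Then there exists a map j : {1,…,k} → V with κ(j(i)) = i for all i ∈ {1,…,k}, such that for every face S ∈ Δ the set {j(i) : i ∈ κ(S)} (where κ(S) = {κ(v) : v ∈ S}) is a face of Δ. -/
/-!
In each colour class pick a vertex whose set of facets is largest; linearity of the colouring
makes it contain the facet set of every vertex of that colour. A face `S` lies in some facet `F`,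
so every `v ∈ S` lies in `F`, hence so does the chosen vertex of colour `κ v`. The image of `S`
is therefore contained in the face `F`.
-/

open Finset Function

variable {V : Type} [Fintype V] [DecidableEq V]

theorem Finset.exists_forall_le_of_comparable {ι α : Type*} [Preorder α] (f : ι → α)
    (s : Finset ι) (hs : s.Nonempty) (hf : ∀ a ∈ s, ∀ b ∈ s, f a ≤ f b ∨ f b ≤ f a) :
    ∃ a ∈ s, ∀ b ∈ s, f b ≤ f a := by
  obtain ⟨a, ha, hmax⟩ := s.exists_maximalFor f hs
  exact ⟨a, ha, fun b hb => (hf a ha b hb).elim (hmax hb) id⟩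

omit [Fintype V] [DecidableEq V] in
theorem exists_isFacet_superset {Δ : Finset (Finset V)} {S : Finset V} (hS : S ∈ Δ) :
    ∃ F, IsFacet Δ F ∧ S ⊆ F := by
  obtain ⟨F, hSF, hF, hmax⟩ := Δ.exists_le_maximal hS
  exact ⟨F, ⟨hF, fun G hG hFG => le_antisymm hFG (hmax hG hFG)⟩, hSF⟩

omit [DecidableEq V] in
theorem IsLinearColoring.exists_facetsOf_maximal {k : ℕ} {Δ : Finset (Finset V)}
    {κ : V → Fin k} (hκ : IsLinearColoring Δ κ) (i : Fin k) :
    ∃ v, κ v = i ∧ ∀ u, κ u = i → facetsOf Δ u ⊆ facetsOf Δ v := by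
  obtain ⟨w, hw⟩ := hκ.1 i
  obtain ⟨v, hv, hmax⟩ := (univ.filter (κ · = i)).exists_forall_le_of_comparable (facetsOf Δ)
    ⟨w, by simp [hw]⟩ (fun a ha b hb => hκ.2 a b (by simp_all))
  exact ⟨v, (mem_filter.1 hv).2, fun u hu => hmax u (by simp [hu])⟩

/-- There is a choice `j` of one vertex of each color such that for every face `S`,
the set `{j(i) : i ∈ κ(S)}` is again a face. -/
theorem stmt_5 {k : ℕ} (Δ : Finset (Finset V)) (hΔ : IsComplex Δ)
    (κ : V → Fin k) (hκ : IsLinearColoring Δ κ) :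
    ∃ j : Fin k → V, (∀ i : Fin k, κ (j i) = i) ∧
      ∀ S ∈ Δ, (S.image κ).image j ∈ Δ := by
  choose j hjκ hjmax using hκ.exists_facetsOf_maximal
  refine ⟨j, hjκ, fun S hS => ?_⟩
  obtain ⟨F, hF, hSF⟩ := exists_isFacet_superset hS
  refine hΔ.1 F hF.1 _ fun x hx => ?_
  obtain ⟨_, ⟨v, hv, rfl⟩, rfl⟩ := by simpa only [mem_image] using hx
  exact (hjmax (κ v) v rfl ⟨hF, hSF hv⟩).2
end

section
/- Let Δ be a finite abstract simplicial complex on a finite vertex set V and let κ : V → {1,…,k} be a k-linear coloring of Δ. Then there exists a representative subcomplex of Δ with respect to κ, i.e., a subcomplex Δ_κ ⊆ Δ such that for each i ∈ {1,…,k} there is exactly one vertex y of Δ_κ with κ(y) = i, and for every pair of vertices x of Δ and y of Δ_κ with κ(x) = κ(y) one has F(x) ⊆ F(y). -/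
/-! Within one colour class the facet sets `F(v)` form a finite nonempty chain under inclusion,
so every colour `i` has a vertex `yᵢ` whose `F(yᵢ)` contains all the others. The faces of `Δ`
contained in some `{yᵢ}` then form a representative subcomplex. -/

open Finset Function

variable {V : Type} [Fintype V] [DecidableEq V]

/-- `Δκ` is a representative subcomplex of `Δ` with respect to the linear coloring `κ`:
it is a subcomplex of `Δ`, for each color `i` it has exactly one vertex of color `i`,
and whenever `x` is a vertex of `Δ` and `y` a vertex of `Δκ` of the same color,
`F(x) ⊆ F(y)`. -/
def IsRepresentative {k : ℕ} (Δ Δκ : Finset (Finset V)) (κ : V → Fin k) : Prop :=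
  Δκ ⊆ Δ ∧ (∀ S ∈ Δκ, ∀ T ⊆ S, T ∈ Δκ) ∧
  (∀ i : Fin k, ∃! y : V, ({y} : Finset V) ∈ Δκ ∧ κ y = i) ∧
  ∀ x y : V, ({y} : Finset V) ∈ Δκ → κ x = κ y → facetsOf Δ x ⊆ facetsOf Δ y

omit [DecidableEq V] in
theorem IsLinearColoring.exists_forall_facetsOf_subset {k : ℕ} {Δ : Finset (Finset V)}
    {κ : V → Fin k} (hκ : IsLinearColoring Δ κ) (i : Fin k) :
    ∃ y, κ y = i ∧ ∀ x, κ x = i → facetsOf Δ x ⊆ facetsOf Δ y := by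
  have : Nonempty {v // κ v = i} := let ⟨v, hv⟩ := hκ.1 i; ⟨⟨v, hv⟩⟩
  have hdir : Directed (· ⊆ ·) fun v : {v // κ v = i} => facetsOf Δ v := fun a b =>
    (hκ.2 a b (a.2.trans b.2.symm)).elim (fun h => ⟨b, h, le_rfl⟩) fun h => ⟨a, le_rfl, h⟩
  obtain ⟨y, hy⟩ := hdir.finite_le id
  exact ⟨y, y.2, fun x hx => hy ⟨x, hx⟩⟩

def discreteSubcomplex {ι : Type*} [Fintype ι] (Δ : Finset (Finset V)) (y : ι → V) :
    Finset (Finset V) :=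
  Δ.filter fun S => ∃ i, S ⊆ {y i}

section discreteSubcomplex

variable {ι : Type*} [Fintype ι] {Δ : Finset (Finset V)} {y : ι → V}

omit [Fintype V] in
theorem discreteSubcomplex_subset : discreteSubcomplex Δ y ⊆ Δ :=
  filter_subset _ _

omit [Fintype V] in
theorem discreteSubcomplex_downwardClosed (hΔ : IsComplex Δ) :
    ∀ S ∈ discreteSubcomplex Δ y, ∀ T ⊆ S, T ∈ discreteSubcomplex Δ y := by
  intro S hS T hTS
  obtain ⟨hSΔ, i, hSi⟩ := mem_filter.mp hS
  exact mem_filter.mpr ⟨hΔ.1 S hSΔ T hTS, i, hTS.trans hSi⟩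

omit [Fintype V] in
theorem singleton_mem_discreteSubcomplex_iff (hΔ : IsComplex Δ) {v : V} :
    {v} ∈ discreteSubcomplex Δ y ↔ ∃ i, y i = v := by
  simp only [discreteSubcomplex, mem_filter, singleton_subset_singleton, hΔ.2 v, true_and,
    eq_comm]

end discreteSubcomplex

/-- Every linearly colored complex has a representative subcomplex. -/
theorem stmt_6 {k : ℕ} (Δ : Finset (Finset V)) (hΔ : IsComplex Δ)
    (κ : V → Fin k) (hκ : IsLinearColoring Δ κ) :
    ∃ Δκ : Finset (Finset V), IsRepresentative Δ Δκ κ := by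
  choose y hy_color hy_top using hκ.exists_forall_facetsOf_subset
  refine ⟨discreteSubcomplex Δ y, discreteSubcomplex_subset,
    discreteSubcomplex_downwardClosed hΔ, fun i => ⟨y i, ?_, ?_⟩, ?_⟩
  · exact ⟨(singleton_mem_discreteSubcomplex_iff hΔ).mpr ⟨i, rfl⟩, hy_color i⟩
  · rintro _ ⟨hz, rfl⟩
    obtain ⟨j, rfl⟩ := (singleton_mem_discreteSubcomplex_iff hΔ).mp hz
    rw [hy_color]
  · intro x z hz hxz
    obtain ⟨j, rfl⟩ := (singleton_mem_discreteSubcomplex_iff hΔ).mp hz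
    exact hy_top j x (hxz.trans (hy_color j))
end

section
/- Let Δ be a finite abstract simplicial complex on a finite vertex set V with a k-linear coloring κ, let Δ_κ be a representative subcomplex of Δ with respect to κ, and for each i ∈ {1,…,k} let w_i denote the unique vertex of Δ_κ with κ(w_i) = i. Then for every face S ∈ Δ, the set S ∪ {w_{κ(v)} : v ∈ S} is a face of Δ. -/
open Finset Function

variable {V : Type} [Fintype V] [DecidableEq V]

lemma exists_facet_superset (Δ : Finset (Finset V)) {S : Finset V} (hS : S ∈ Δ) :
    ∃ F, IsFacet Δ F ∧ S ⊆ F := by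
  obtain ⟨F, hF, hmax⟩ := Finset.exists_maximal (s := Δ.filter (fun T => S ⊆ T))
    ⟨S, by simp [hS]⟩
  simp only [Finset.mem_filter] at hF
  refine ⟨F, ⟨hF.1, fun G hG hFG => ?_⟩, hF.2⟩
  by_contra hne
  exact hne (Finset.Subset.antisymm hFG (hmax (Finset.mem_filter.2 ⟨hG, hF.2.trans hFG⟩) hFG))

/-- If `w i` denotes the unique vertex of the representative subcomplex `Δκ` of color `i`,
then for every face `S` of `Δ`, the set `S ∪ {w (κ v) : v ∈ S}` is a face of `Δ`. -/
theorem stmt_8 {k : ℕ} (Δ : Finset (Finset V)) (hΔ : IsComplex Δ)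
    (κ : V → Fin k) (hκ : IsLinearColoring Δ κ)
    (Δκ : Finset (Finset V)) (hrep : IsRepresentative Δ Δκ κ)
    (w : Fin k → V) (hw : ∀ i : Fin k, ({w i} : Finset V) ∈ Δκ ∧ κ (w i) = i) :
    ∀ S ∈ Δ, S ∪ S.image (fun v => w (κ v)) ∈ Δ := by
  intro S hS
  suffices h : ∀ T : Finset V, T ⊆ S.image (fun v => w (κ v)) → S ∪ T ∈ Δ from
    h _ (Finset.Subset.refl _)
  intro T
  induction T using Finset.induction_on with
  | empty => intro _; simpa using hS
  | insert a T' ha ih =>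
    intro hsub
    have hT' : S ∪ T' ∈ Δ := ih (fun x hx => hsub (Finset.mem_insert_of_mem hx))
    obtain ⟨v, hv, hva⟩ := Finset.mem_image.1 (hsub (Finset.mem_insert_self a T'))
    obtain ⟨F, hF, hSF⟩ := exists_facet_superset Δ hT'
    have hFv : F ∈ facetsOf Δ v := ⟨hF, hSF (Finset.mem_union_left _ hv)⟩
    have hFw : F ∈ facetsOf Δ (w (κ v)) :=
      hrep.2.2.2 v (w (κ v)) (hw (κ v)).1 (by rw [(hw (κ v)).2]) hFv
    have haF : a ∈ F := hva ▸ hFw.2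
    apply hΔ.1 F hF.1
    intro x hx
    rcases Finset.mem_union.1 hx with h | h
    · exact hSF (Finset.mem_union_left _ h)
    · rcases Finset.mem_insert.1 h with rfl | h
      · exact haF
      · exact hSF (Finset.mem_union_right _ h)
end

section
/- Let X₁ be a finite abstract simplicial complex on a vertex set V, let X₂ be a subcomplex of X₁, and let Y be a finite abstract simplicial complex on a vertex set W disjoint from V. If X₁ LC-reduces to X₂, then the join X₁ ∗ Y LC-reduces to the join X₂ ∗ Y. -/
open Finset Function

variable {V : Type} [Fintype V] [DecidableEq V]

/-- A collection of finite sets closed under taking subsets: an abstract simplicial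
complex on its own vertex set. -/
def DownClosed (Δ : Finset (Finset V)) : Prop :=
  ∀ S ∈ Δ, ∀ T ⊆ S, T ∈ Δ

/-- The vertex set of a complex: those `v` with `{v}` a face. -/
def verts (Δ : Finset (Finset V)) : Finset V :=
  Finset.univ.filter fun v => ({v} : Finset V) ∈ Δ

/-- `κ` restricts to a surjective `k`-linear coloring of the vertex set of `Δ`:
every color is used on some vertex of `Δ`, and vertices of `Δ` with the same color
have facet sets comparable by inclusion. -/
def IsLinearOn {k : ℕ} (Δ : Finset (Finset V)) (κ : V → Fin k) : Prop :=
  (∀ i : Fin k, ∃ v ∈ verts Δ, κ v = i) ∧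
  ∀ u ∈ verts Δ, ∀ v ∈ verts Δ, κ u = κ v →
    facetsOf Δ u ⊆ facetsOf Δ v ∨ facetsOf Δ v ⊆ facetsOf Δ u

/-- `Δ'` is a representative subcomplex of `Δ` with respect to the linear coloring `κ`
of `Δ`: `Δ'` is a subcomplex with exactly one vertex of each color, and whenever a
vertex `x` of `Δ` has the same color as a vertex `y` of `Δ'`, `F(x) ⊆ F(y)`. -/
def IsRepSub {k : ℕ} (Δ Δ' : Finset (Finset V)) (κ : V → Fin k) : Prop :=
  Δ' ⊆ Δ ∧ DownClosed Δ' ∧ IsLinearOn Δ κ ∧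
  (∀ i : Fin k, ∃! y : V, y ∈ verts Δ' ∧ κ y = i) ∧
  ∀ x ∈ verts Δ, ∀ y ∈ verts Δ', κ x = κ y → facetsOf Δ x ⊆ facetsOf Δ y

/-- `Δ` LC-reduces to `Δ'`: there is a chain of subcomplexes from `Δ` to `Δ'` in which
each term is a representative subcomplex of the previous one with respect to some
linear coloring. -/
def LCReduces (Δ Δ' : Finset (Finset V)) : Prop :=
  ∃ (t : ℕ) (c : ℕ → Finset (Finset V)), c 0 = Δ ∧ c t = Δ' ∧
    ∀ r < t, ∃ (k : ℕ) (κ : V → Fin k), IsRepSub (c r) (c (r + 1)) κ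

/-- The join of a complex on `V` and a complex on `W` (disjointness of the vertex
sets is modeled by the sum type `V ⊕ W`): its faces are the unions `S ∪ T` with
`S ∈ X ∪ {∅}` and `T ∈ Y ∪ {∅}`. -/
def simplicialJoin {W : Type} [Fintype W] [DecidableEq W]
    (X : Finset (Finset V)) (Y : Finset (Finset W)) : Finset (Finset (V ⊕ W)) :=
  ((insert (∅ : Finset V) X) ×ˢ (insert (∅ : Finset W) Y)).image
    fun p => p.1.map Function.Embedding.inl ∪ p.2.map Function.Embedding.inr

/- Joining with `Y` turns every step of an LC-reduction of `X₁` into a step of an LC-reduction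
of `X₁ ∗ Y`: keep the coloring on `V` and give each vertex of `Y` a fresh color of its own. A facet
of the join through a vertex `v ∈ V` restricts on `V` to a facet of the first factor through `v`,
so comparability of the facet sets `F(v)` passes from a complex to its join with `Y`. -/

section Join

omit [Fintype V]

variable {W : Type} [Fintype W] [DecidableEq W] {X X' : Finset (Finset V)} {Y : Finset (Finset W)}

lemma mem_simplicialJoin {F : Finset (V ⊕ W)} :
    F ∈ simplicialJoin X Y ↔ F.toLeft ∈ insert ∅ X ∧ F.toRight ∈ insert ∅ Y := by
  have map_union_map (S : Finset V) (T : Finset W) :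
      S.map Embedding.inl ∪ T.map Embedding.inr = S.disjSum T := by
    ext x; cases x <;> simp
  simp only [simplicialJoin, map_union_map, mem_image, mem_product, Prod.exists, disjSum_eq_iff]
  aesop

lemma disjSum_mem_simplicialJoin {S : Finset V} {T : Finset W} :
    S.disjSum T ∈ simplicialJoin X Y ↔ S ∈ insert ∅ X ∧ T ∈ insert ∅ Y := by
  rw [mem_simplicialJoin, toLeft_disjSum, toRight_disjSum]

lemma simplicialJoin_mono_left (h : X ⊆ X') : simplicialJoin X Y ⊆ simplicialJoin X' Y := by
  intro F hF
  rw [mem_simplicialJoin] at hF ⊢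
  exact ⟨insert_subset_insert _ h hF.1, hF.2⟩

lemma DownClosed.insert_empty (hX : DownClosed X) : DownClosed (insert ∅ X) := by
  intro S hS T hT
  rcases mem_insert.1 hS with rfl | hS
  · simp [subset_empty.1 hT]
  · exact mem_insert_of_mem (hX S hS T hT)

lemma DownClosed.simplicialJoin (hX : DownClosed X) (hY : DownClosed Y) :
    DownClosed (simplicialJoin X Y) := by
  intro F hF G hG
  rw [mem_simplicialJoin] at hF ⊢
  exact ⟨hX.insert_empty _ hF.1 _ (toLeft_subset_toLeft hG),
    hY.insert_empty _ hF.2 _ (toRight_subset_toRight hG)⟩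

lemma IsFacet.toLeft {F : Finset (V ⊕ W)} (hF : IsFacet (simplicialJoin X Y) F)
    (hne : F.toLeft.Nonempty) : IsFacet X F.toLeft := by
  obtain ⟨hX, hY⟩ := mem_simplicialJoin.1 hF.1
  refine ⟨(mem_insert.1 hX).resolve_left hne.ne_empty, fun G hG hFG ↦ ?_⟩
  have hGY : G.disjSum F.toRight ∈ simplicialJoin X Y :=
    disjSum_mem_simplicialJoin.2 ⟨mem_insert_of_mem hG, hY⟩
  rw [hF.2 _ hGY (subset_disjSum.2 ⟨hFG, subset_rfl⟩), toLeft_disjSum]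

lemma facetsOf_simplicialJoin_inl_subset {u v : V} (h : facetsOf X u ⊆ facetsOf X v) :
    facetsOf (simplicialJoin X Y) (Sum.inl u) ⊆ facetsOf (simplicialJoin X Y) (Sum.inl v) := by
  rintro F ⟨hF, hu⟩
  have hu : u ∈ F.toLeft := mem_toLeft.2 hu
  exact ⟨hF, mem_toLeft.1 (h ⟨hF.toLeft ⟨u, hu⟩, hu⟩).2⟩

omit [DecidableEq V] [DecidableEq W]

noncomputable def joinColoring {k : ℕ} (κ : V → Fin k) : V ⊕ W → Fin (k + Fintype.card W) :=
  finSumFinEquiv ∘ Sum.map κ (Fintype.equivFin W)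

variable {k : ℕ} {κ : V → Fin k}

lemma joinColoring_inl_eq_inl {a b : V} :
    joinColoring (W := W) κ (Sum.inl a) = joinColoring κ (Sum.inl b) ↔ κ a = κ b :=
  finSumFinEquiv.injective.eq_iff.trans Sum.inl_injective.eq_iff

lemma joinColoring_inr_eq_inr {a b : W} :
    joinColoring κ (Sum.inr a) = joinColoring κ (Sum.inr b) ↔ a = b :=
  finSumFinEquiv.injective.eq_iff.trans <|
    Sum.inr_injective.eq_iff.trans (Fintype.equivFin W).injective.eq_iff

lemma joinColoring_inl_ne_inr {a : V} {b : W} :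
    joinColoring κ (Sum.inl a) ≠ joinColoring κ (Sum.inr b) :=
  finSumFinEquiv.injective.ne Sum.inl_ne_inr

end Join

section JoinColoring

variable {W : Type} [Fintype W] [DecidableEq W] {X : Finset (Finset V)} {Y : Finset (Finset W)}

lemma mem_verts {Δ : Finset (Finset V)} {v : V} : v ∈ verts Δ ↔ {v} ∈ Δ := by
  simp [verts]

lemma inl_mem_verts_simplicialJoin {v : V} :
    Sum.inl v ∈ verts (simplicialJoin X Y) ↔ v ∈ verts X := by
  have : ({Sum.inl v} : Finset (V ⊕ W)) = ({v} : Finset V).disjSum ∅ := by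
    ext x; cases x <;> simp
  rw [mem_verts, mem_verts, this, disjSum_mem_simplicialJoin]
  simp

lemma inr_mem_verts_simplicialJoin {w : W} :
    Sum.inr w ∈ verts (simplicialJoin X Y) ↔ w ∈ verts Y := by
  have : ({Sum.inr w} : Finset (V ⊕ W)) = (∅ : Finset V).disjSum {w} := by
    ext x; cases x <;> simp
  rw [mem_verts, mem_verts, this, disjSum_mem_simplicialJoin]
  simp


variable {k : ℕ} {κ : V → Fin k}

lemma IsLinearOn.simplicialJoin (hY : ∀ w : W, {w} ∈ Y) (h : IsLinearOn X κ) :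
    IsLinearOn (simplicialJoin X Y) (joinColoring κ) := by
  obtain ⟨hsurj, hlin⟩ := h
  refine ⟨fun i ↦ ?_, ?_⟩
  · obtain ⟨j | j, rfl⟩ := finSumFinEquiv.surjective i
    · obtain ⟨v, hv, rfl⟩ := hsurj j
      exact ⟨Sum.inl v, inl_mem_verts_simplicialJoin.2 hv, rfl⟩
    · refine ⟨Sum.inr ((Fintype.equivFin W).symm j),
        inr_mem_verts_simplicialJoin.2 (mem_verts.2 (hY _)), ?_⟩
      simp [joinColoring]
  · rintro (a | a) ha (b | b) hb hab
    · rw [inl_mem_verts_simplicialJoin] at ha hb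
      exact (hlin a ha b hb (joinColoring_inl_eq_inl.1 hab)).imp
        facetsOf_simplicialJoin_inl_subset facetsOf_simplicialJoin_inl_subset
    · exact absurd hab joinColoring_inl_ne_inr
    · exact absurd hab.symm joinColoring_inl_ne_inr
    · exact Or.inl (joinColoring_inr_eq_inr.1 hab ▸ subset_rfl)

lemma existsUnique_mem_verts_simplicialJoin_joinColoring (hY : ∀ w : W, {w} ∈ Y)
    (h : ∀ i : Fin k, ∃! y : V, y ∈ verts X ∧ κ y = i) (i : Fin (k + Fintype.card W)) :
    ∃! y : V ⊕ W, y ∈ verts (simplicialJoin X Y) ∧ joinColoring κ y = i := by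
  obtain ⟨j | j, rfl⟩ := finSumFinEquiv.surjective i
  · obtain ⟨y, ⟨hy, rfl⟩, huniq⟩ := h j
    refine ⟨Sum.inl y, ⟨inl_mem_verts_simplicialJoin.2 hy, rfl⟩, ?_⟩
    rintro (z | z) ⟨hz, hzy⟩
    · rw [huniq z ⟨inl_mem_verts_simplicialJoin.1 hz, joinColoring_inl_eq_inl.1 hzy⟩]
    · exact absurd hzy.symm joinColoring_inl_ne_inr
  · obtain ⟨w, rfl⟩ := (Fintype.equivFin W).surjective j
    refine ⟨Sum.inr w, ⟨inr_mem_verts_simplicialJoin.2 (mem_verts.2 (hY w)), rfl⟩, ?_⟩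
    rintro (z | z) ⟨-, hzw⟩
    · exact absurd hzw joinColoring_inl_ne_inr
    · rw [joinColoring_inr_eq_inr.1 hzw]

lemma IsRepSub.simplicialJoin {X' : Finset (Finset V)} (hYdown : DownClosed Y)
    (hY : ∀ w : W, {w} ∈ Y) (h : IsRepSub X X' κ) :
    IsRepSub (simplicialJoin X Y) (simplicialJoin X' Y) (joinColoring κ) := by
  obtain ⟨hsub, hX', hlin, huniq, hfacets⟩ := h
  refine ⟨simplicialJoin_mono_left hsub, hX'.simplicialJoin hYdown, hlin.simplicialJoin hY,
    existsUnique_mem_verts_simplicialJoin_joinColoring hY huniq, ?_⟩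
  rintro (a | a) ha (b | b) hb hab
  · exact facetsOf_simplicialJoin_inl_subset (hfacets a (inl_mem_verts_simplicialJoin.1 ha) b
      (inl_mem_verts_simplicialJoin.1 hb) (joinColoring_inl_eq_inl.1 hab))
  · exact absurd hab joinColoring_inl_ne_inr
  · exact absurd hab.symm joinColoring_inl_ne_inr
  · rw [joinColoring_inr_eq_inr.1 hab]

end JoinColoring

theorem stmt_11_general {W : Type} [Fintype W] [DecidableEq W]
    (X₁ X₂ : Finset (Finset V)) (Y : Finset (Finset W))
    (hY : DownClosed Y ∧ ∀ w : W, ({w} : Finset W) ∈ Y)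
    (h : LCReduces X₁ X₂) :
    LCReduces (simplicialJoin X₁ Y) (simplicialJoin X₂ Y) := by
  obtain ⟨t, c, rfl, rfl, hstep⟩ := h
  refine ⟨t, fun r ↦ simplicialJoin (c r) Y, rfl, rfl, fun r hr ↦ ?_⟩
  obtain ⟨k, κ, hrep⟩ := hstep r hr
  exact ⟨_, _, hrep.simplicialJoin hY.1 hY.2⟩

/-- If `X₁` LC-reduces to `X₂`, then `X₁ ∗ Y` LC-reduces to `X₂ ∗ Y`. -/
theorem stmt_11 {W : Type} [Fintype W] [DecidableEq W]
    (X₁ X₂ : Finset (Finset V)) (Y : Finset (Finset W))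
    (hX₁ : DownClosed X₁ ∧ ∀ v : V, ({v} : Finset V) ∈ X₁)
    (hsub : X₂ ⊆ X₁) (hX₂ : DownClosed X₂)
    (hY : DownClosed Y ∧ ∀ w : W, ({w} : Finset W) ∈ Y)
    (h : LCReduces X₁ X₂) :
    LCReduces (simplicialJoin X₁ Y) (simplicialJoin X₂ Y) :=
  stmt_11_general X₁ X₂ Y hY h
end

section
/- Let P be a finite partially ordered set and let x, y ∈ P. Then M_x ⊆ M_y (every maximal chain of P containing x also contains y) if and only if y dominates x (every element of P comparable with x is comparable with y). -/
/-! If `z` is comparable with `x`, Zorn's lemma extends the chain `{x, z}` to a maximal chain,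
which then contains `y`, so `z` and `y` are comparable. Conversely, if `y` is comparable with
everything comparable with `x`, then `y` can be added to any chain through `x`, so by maximality
every maximal chain through `x` already contains `y`. -/

section MaxChain

variable {α : Type*} {r : α → α → Prop} {s : Set α} {a b : α}

theorem IsMaxChain.mem_of_forall_total (hs : IsMaxChain r s) (ha : ∀ b ∈ s, r a b ∨ r b a) :
    a ∈ s :=
  hs.2 (hs.1.insert fun b hb _ ↦ ha b hb) (Set.subset_insert a s) ▸ Set.mem_insert a s

theorem exists_isMaxChain_mem_of_total (hab : r a b ∨ r b a) :
    ∃ s, IsMaxChain r s ∧ a ∈ s ∧ b ∈ s := by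
  have hpair : IsChain r {a, b} :=
    hab.elim IsChain.pair fun hba ↦ Set.pair_comm b a ▸ IsChain.pair hba
  obtain ⟨s, hs, hsub⟩ := hpair.exists_maxChain
  exact ⟨s, hs, hsub (Set.mem_insert a {b}), hsub (Set.mem_insert_of_mem a rfl)⟩

theorem forall_isMaxChain_mem_imp_mem_iff [Std.Refl r] {x y : α} :
    (∀ s, IsMaxChain r s → x ∈ s → y ∈ s) ↔ ∀ z, (r z x ∨ r x z) → (r z y ∨ r y z) := by
  constructor
  · intro h z hzx
    obtain ⟨s, hs, hz, hx⟩ := exists_isMaxChain_mem_of_total hzx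
    exact hs.isChain.total hz (h s hs hx)
  · intro h s hs hx
    exact hs.mem_of_forall_total fun z hz ↦ (h z (hs.isChain.total hz hx)).symm

end MaxChain

theorem stmt_15_general {P : Type} [PartialOrder P] (x y : P) :
    (∀ C : Set P, IsMaxChain (· ≤ ·) C → x ∈ C → y ∈ C) ↔
    (∀ z : P, (z ≤ x ∨ x ≤ z) → (z ≤ y ∨ y ≤ z)) :=
  forall_isMaxChain_mem_imp_mem_iff

/-- In a finite poset, every maximal chain containing `x` also contains `y`
(`M_x ⊆ M_y`) if and only if `y` dominates `x`, i.e. every element comparable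
with `x` is comparable with `y`. -/
theorem stmt_15 {P : Type} [Fintype P] [PartialOrder P] (x y : P) :
    (∀ C : Set P, IsMaxChain (· ≤ ·) C → x ∈ C → y ∈ C) ↔
    (∀ z : P, (z ≤ x ∨ x ≤ z) → (z ≤ y ∨ y ≤ z)) :=
  stmt_15_general x y
end

section
/- Let P be a finite partially ordered set and let ψ : P → P be a monotone map (an order-preserving map such that for every x ∈ P, either x ≤ ψ(x) or ψ(x) ≤ x) which is not the identity map. Then there exists x ∈ P with ψ(x) ≠ x such that ψ(x) dominates x, i.e., every element of P comparable with x is comparable with ψ(x). -/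
/-- If `ψ` is a monotone map (an order-preserving map with `x ≤ ψ x` or `ψ x ≤ x`
for all `x`) on a finite poset which is not the identity, then there is an
`x` with `ψ x ≠ x` such that `ψ x` dominates `x`. -/
theorem stmt_17 {P : Type} [Fintype P] [PartialOrder P] (ψ : P → P)
    (hord : Monotone ψ) (hmono : ∀ x : P, x ≤ ψ x ∨ ψ x ≤ x)
    (hne : ψ ≠ id) :
    ∃ x : P, ψ x ≠ x ∧
      ∀ z : P, (z ≤ x ∨ x ≤ z) → (z ≤ ψ x ∨ ψ x ≤ z) := by
  classical
  by_cases hup : ∃ x : P, x < ψ x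
  · -- take a maximal element of {x | x < ψ x}
    obtain ⟨m, hm, hmax⟩ :=
      (Set.toFinset {x : P | x < ψ x}).exists_maximal
        (by
          obtain ⟨x, hx⟩ := hup
          exact ⟨x, by simpa using hx⟩)
    rw [Set.mem_toFinset] at hm
    refine ⟨m, (ne_of_gt hm), ?_⟩
    intro z hz
    rcases hz with h | h
    · exact Or.inl (h.trans hm.le)
    · rcases eq_or_lt_of_le h with rfl | hlt
      · exact Or.inl hm.le
      · -- z > m, so by maximality ¬ z < ψ z, hence ψ z ≤ z
        have hnz : ¬ z < ψ z := by
          intro hzz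
          exact lt_irrefl m (hlt.trans_le (hmax (by simpa [Set.mem_toFinset] using hzz) hlt.le))
        have hψz : ψ z ≤ z := by
          rcases hmono z with h1 | h1
          · rcases eq_or_lt_of_le h1 with e | e
            · exact e.ge
            · exact absurd e hnz
          · exact h1
        exact Or.inr ((hord h).trans hψz)
  · -- every non-fixed point satisfies ψ x < x; take a minimal such
    push_neg at hup
    have hdown : ∀ x : P, ψ x ≠ x → ψ x < x := by
      intro x hx
      rcases hmono x with h | h
      · exact absurd (lt_of_le_of_ne h fun e => hx e.symm) (hup x)
      · exact lt_of_le_of_ne h hx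
    obtain ⟨a, ha⟩ : ∃ a : P, ψ a ≠ a := by
      by_contra hc
      push_neg at hc
      exact hne (funext fun x => hc x)
    obtain ⟨m, hm, hmin⟩ :=
      (Set.toFinset {x : P | ψ x < x}).exists_minimal
        ⟨a, by simpa [Set.mem_toFinset] using hdown a ha⟩
    rw [Set.mem_toFinset] at hm
    refine ⟨m, ne_of_lt hm, ?_⟩
    intro z hz
    rcases hz with h | h
    · rcases eq_or_lt_of_le h with rfl | hlt
      · exact Or.inr hm.le
      · have hnz : ¬ ψ z < z := fun hzz =>
          lt_irrefl z (hlt.trans_le (hmin (by simpa [Set.mem_toFinset] using hzz) hlt.le))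
        have hzψ : z ≤ ψ z := by
          rcases hmono z with h1 | h1
          · exact h1
          · rcases eq_or_lt_of_le h1 with e | e
            · exact e.ge
            · exact absurd e hnz
        exact Or.inl (hzψ.trans (hord h))
    · exact Or.inr (hm.le.trans h)
end

section
/- Let P be a finite partially ordered set and let φ : P → P be a closure operator, i.e., an order-preserving map such that for every x ∈ P either x ≤ φ(x) or φ(x) ≤ x, and φ ∘ φ = φ. Then the order complex Δ(P) LC-reduces to the order complex Δ(φ(P)) of the image of φ. -/
open Finset Function

variable {V : Type} [Fintype V] [DecidableEq V]

open scoped Classical in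
/-- The order complex of the subset `A` of a finite poset: its faces are the
finite chains contained in `A`. -/
noncomputable def orderCpx {P : Type} [Fintype P] [DecidableEq P] [PartialOrder P]
    (A : Finset P) : Finset (Finset P) :=
  A.powerset.filter fun S => IsChain (· ≤ ·) (S : Set P)

section Aux

lemma lcReduces_refl (Δ : Finset (Finset V)) : LCReduces Δ Δ :=
  ⟨0, fun _ => Δ, rfl, rfl, fun r hr => absurd hr (Nat.not_lt_zero r)⟩

lemma lcReduces_cons {Δ Δ' Δ'' : Finset (Finset V)} {k : ℕ} {κ : V → Fin k}
    (h1 : IsRepSub Δ Δ' κ) (h2 : LCReduces Δ' Δ'') : LCReduces Δ Δ'' := by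
  obtain ⟨t, c, hc0, hct, hstep⟩ := h2
  refine ⟨t + 1, fun n => if n = 0 then Δ else c (n - 1), by simp, by simp [hct], ?_⟩
  intro r hr
  rcases Nat.eq_zero_or_pos r with rfl | hrpos
  · refine ⟨k, κ, ?_⟩
    simpa [hc0] using h1
  · obtain ⟨k', κ', h⟩ := hstep (r - 1) (by omega)
    refine ⟨k', κ', ?_⟩
    have h0 : ¬ r = 0 := by omega
    have h1' : ¬ r + 1 = 0 := by omega
    have e1 : r - 1 + 1 = r := by omega
    have e2 : r + 1 - 1 = r := by omega
    simp only [if_neg h0, if_neg h1', e2]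
    rw [← e1]
    exact h

variable {P : Type} [Fintype P] [DecidableEq P] [PartialOrder P]

open scoped Classical

lemma mem_orderCpx {A S : Finset P} :
    S ∈ orderCpx A ↔ S ⊆ A ∧ IsChain (· ≤ ·) (S : Set P) := by
  simp [orderCpx]

lemma verts_orderCpx (A : Finset P) : verts (orderCpx A) = A := by
  ext v
  simp only [verts, Finset.mem_filter, Finset.mem_univ, true_and, mem_orderCpx,
    Finset.singleton_subset_iff, Finset.coe_singleton]
  exact ⟨fun h => h.1, fun h => ⟨h, Set.subsingleton_singleton.isChain⟩⟩

lemma downClosed_orderCpx (A : Finset P) : DownClosed (orderCpx A) := by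
  intro S hS T hT
  rw [mem_orderCpx] at hS ⊢
  exact ⟨hT.trans hS.1, hS.2.mono (by exact_mod_cast hT)⟩

lemma facetsOf_mono {A : Finset P} {x y : P} (hy : y ∈ A)
    (hcomp : ∀ c ∈ A, (c ≤ x ∨ x ≤ c) → (c ≤ y ∨ y ≤ c)) :
    facetsOf (orderCpx A) x ⊆ facetsOf (orderCpx A) y := by
  rintro F ⟨⟨hF, hmax⟩, hxF⟩
  have hFA : F ⊆ A := (mem_orderCpx.1 hF).1
  have hch : IsChain (· ≤ ·) (F : Set P) := (mem_orderCpx.1 hF).2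
  have hcy : ∀ c ∈ F, c ≤ y ∨ y ≤ c := by
    intro c hc
    apply hcomp c (hFA hc)
    rcases eq_or_ne c x with rfl | hne
    · exact Or.inl le_rfl
    · exact hch (by exact_mod_cast hc) (by exact_mod_cast hxF) hne
  have hins : insert y F ∈ orderCpx A := by
    rw [mem_orderCpx]
    refine ⟨Finset.insert_subset hy hFA, ?_⟩
    rw [Finset.coe_insert]
    exact hch.insert fun b hb _ => (hcy b (by exact_mod_cast hb)).symm
  have heq : F = insert y F := hmax _ hins (Finset.subset_insert _ _)
  exact ⟨⟨hF, hmax⟩, heq ▸ Finset.mem_insert_self y F⟩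

lemma step_repsub {A : Finset P} {x y : P} (hx : x ∈ A) (hy : y ∈ A) (hxy : y ≠ x)
    (hcomp : ∀ c ∈ A, (c ≤ x ∨ x ≤ c) → (c ≤ y ∨ y ≤ c)) :
    ∃ (k : ℕ) (κ : P → Fin k), IsRepSub (orderCpx A) (orderCpx (A.erase x)) κ := by
  set B := A.erase x with hB
  have hyB : y ∈ B := Finset.mem_erase.2 ⟨hxy, hy⟩
  set e := B.equivFin with he
  refine ⟨B.card, fun v => if h : v ∈ B then e ⟨v, h⟩ else e ⟨y, hyB⟩, ?_⟩
  set κ : P → Fin B.card := fun v => if h : v ∈ B then e ⟨v, h⟩ else e ⟨y, hyB⟩ with hκ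
  have hκB : ∀ u (hu : u ∈ B), κ u = e ⟨u, hu⟩ := fun u hu => dif_pos hu
  have hκx : κ x = e ⟨y, hyB⟩ := dif_neg (fun h => (Finset.mem_erase.1 h).1 rfl)
  have hinj : ∀ u ∈ B, ∀ v ∈ B, κ u = κ v → u = v := by
    intro u hu v hv h
    rw [hκB u hu, hκB v hv] at h
    exact Subtype.ext_iff.1 (e.injective h)
  have hxy' : ∀ u ∈ B, κ u = κ x → u = y := by
    intro u hu h
    rw [hκB u hu, hκx] at h
    exact Subtype.ext_iff.1 (e.injective h)
  have hFxy : facetsOf (orderCpx A) x ⊆ facetsOf (orderCpx A) y := facetsOf_mono hy hcomp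
  have hBA : B ⊆ A := Finset.erase_subset _ _
  have hvA : verts (orderCpx A) = A := verts_orderCpx A
  have hvB : verts (orderCpx B) = B := verts_orderCpx B
  have hlin : IsLinearOn (orderCpx A) κ := by
    constructor
    · intro i
      refine ⟨(e.symm i).1, ?_, ?_⟩
      · rw [hvA]; exact hBA (e.symm i).2
      · rw [hκB _ (e.symm i).2, Subtype.eta, Equiv.apply_symm_apply]
    · intro u hu v hv h
      rw [hvA] at hu hv
      by_cases hub : u ∈ B <;> by_cases hvb : v ∈ B
      · exact Or.inl (by rw [hinj u hub v hvb h])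
      · have hvx : v = x := by
          by_contra hne
          exact hvb (Finset.mem_erase.2 ⟨hne, hv⟩)
        subst hvx
        have := hxy' u hub h
        subst this
        exact Or.inr hFxy
      · have hux : u = x := by
          by_contra hne
          exact hub (Finset.mem_erase.2 ⟨hne, hu⟩)
        subst hux
        have := hxy' v hvb h.symm
        subst this
        exact Or.inl hFxy
      · have hux : u = x := by
          by_contra hne; exact hub (Finset.mem_erase.2 ⟨hne, hu⟩)
        have hvx : v = x := by
          by_contra hne; exact hvb (Finset.mem_erase.2 ⟨hne, hv⟩)
        subst hux; subst hvx; exact Or.inl subset_rfl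
  refine ⟨?_, downClosed_orderCpx B, hlin, ?_, ?_⟩
  · intro S hS
    rw [mem_orderCpx] at hS ⊢
    exact ⟨hS.1.trans hBA, hS.2⟩
  · intro i
    refine ⟨(e.symm i).1, ⟨by rw [hvB]; exact (e.symm i).2, by rw [hκB _ (e.symm i).2, Subtype.eta, Equiv.apply_symm_apply]⟩, ?_⟩
    rintro z ⟨hz, hzi⟩
    rw [hvB] at hz
    have : κ z = κ (e.symm i).1 := by
      rw [hzi, hκB _ (e.symm i).2, Subtype.eta, Equiv.apply_symm_apply]
    exact hinj z hz _ (e.symm i).2 this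
  · intro u hu v hv h
    rw [hvA] at hu
    rw [hvB] at hv
    by_cases hub : u ∈ B
    · rw [hinj u hub v hv h]
    · have hux : u = x := by
        by_contra hne; exact hub (Finset.mem_erase.2 ⟨hne, hu⟩)
      subst hux
      have := hxy' v hv h.symm
      subst this
      exact hFxy

end Aux

section Main

variable {P : Type} [Fintype P] [DecidableEq P] [PartialOrder P]

open scoped Classical

lemma main_reduce (φ : P → P) (hord : Monotone φ) (hmono : ∀ x : P, x ≤ φ x ∨ φ x ≤ x)
    (hidem : ∀ x, φ (φ x) = φ x) :
    ∀ (n : ℕ) (A : Finset P), A.card ≤ n →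
      (Finset.univ.filter fun p => φ p = p) ⊆ A →
      LCReduces (orderCpx A) (orderCpx (Finset.univ.filter fun p => φ p = p)) := by
  set Fx : Finset P := Finset.univ.filter fun p => φ p = p with hFx
  intro n
  induction n with
  | zero =>
    intro A hcard hsub
    have : A = ∅ := Finset.card_eq_zero.1 (Nat.le_zero.1 hcard)
    subst this
    have : Fx = ∅ := Finset.subset_empty.1 hsub
    rw [this]
    exact lcReduces_refl _
  | succ n ih =>
    intro A hcard hsub
    by_cases hall : ∀ a ∈ A, φ a = a
    · have : A = Fx := Finset.Subset.antisymm
        (fun a ha => Finset.mem_filter.2 ⟨Finset.mem_univ _, hall a ha⟩) hsub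
      rw [this]
      exact lcReduces_refl _
    · push_neg at hall
      obtain ⟨x₀, hx₀A, hx₀⟩ := hall
      -- helper to conclude from a chosen removable x
      have key : ∀ x ∈ A, φ x ≠ x →
          (∀ c ∈ A, (c ≤ x ∨ x ≤ c) → (c ≤ φ x ∨ φ x ≤ c)) →
          LCReduces (orderCpx A) (orderCpx Fx) := by
        intro x hxA hxne hcomp
        have hyFx : φ x ∈ Fx := Finset.mem_filter.2 ⟨Finset.mem_univ _, hidem x⟩
        have hyA : φ x ∈ A := hsub hyFx
        obtain ⟨k, κ, hrep⟩ := step_repsub hxA hyA hxne hcomp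
        refine lcReduces_cons hrep (ih (A.erase x) ?_ ?_)
        · rw [Finset.card_erase_of_mem hxA]; omega
        · intro p hp
          refine Finset.mem_erase.2 ⟨?_, hsub hp⟩
          rintro rfl
          exact hxne (Finset.mem_filter.1 hp).2
      set S : Finset P := A.filter fun a => a < φ a with hS
      by_cases hSne : S.Nonempty
      · obtain ⟨x, hxS, hxmax⟩ := S.exists_maximal hSne
        obtain ⟨hxA, hxlt⟩ := Finset.mem_filter.1 hxS
        refine key x hxA (fun h => absurd h.symm (ne_of_lt hxlt)) ?_
        intro c hcA hc
        rcases hc with hcx | hxc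
        · exact Or.inl (hcx.trans hxlt.le)
        · have hφ : φ x ≤ φ c := hord hxc
          rcases hmono c with hcup | hcdn
          · rcases eq_or_lt_of_le hcup with heq | hlt
            · exact Or.inr (hφ.trans heq.symm.le)
            · have hcS : c ∈ S := Finset.mem_filter.2 ⟨hcA, hlt⟩
              have : ¬ x < c := fun h => lt_irrefl x (lt_of_lt_of_le h (hxmax hcS h.le))
              have hcx : c = x := le_antisymm (by
                rcases lt_or_eq_of_le hxc with h | h
                · exact absurd h this
                · exact h.symm.le) hxc
              exact Or.inl (hcx.le.trans hxlt.le)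
          · exact Or.inr (hφ.trans hcdn)
      · -- no strictly ascending elements remain
        have hdesc : ∀ a ∈ A, φ a ≤ a := by
          intro a ha
          rcases hmono a with h | h
          · rcases eq_or_lt_of_le h with heq | hlt
            · exact heq.symm.le
            · exact absurd ⟨a, Finset.mem_filter.2 ⟨ha, hlt⟩⟩ hSne
          · exact h
        set T : Finset P := A.filter fun a => φ a < a with hT
        have hTne : T.Nonempty :=
          ⟨x₀, Finset.mem_filter.2 ⟨hx₀A, lt_of_le_of_ne (hdesc x₀ hx₀A) hx₀⟩⟩
        obtain ⟨x, hxT, hxmin⟩ := T.exists_minimal hTne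
        obtain ⟨hxA, hxlt⟩ := Finset.mem_filter.1 hxT
        refine key x hxA (ne_of_lt hxlt) ?_
        intro c hcA hc
        rcases hc with hcx | hxc
        · have hφ : φ c ≤ φ x := hord hcx
          rcases eq_or_lt_of_le (hdesc c hcA) with heq | hlt
          · exact Or.inl (heq.ge.trans hφ)
          · have hcT : c ∈ T := Finset.mem_filter.2 ⟨hcA, hlt⟩
            have : ¬ c < x := fun h => lt_irrefl c (lt_of_lt_of_le h (hxmin hcT h.le))
            have hcx' : c = x := le_antisymm hcx (by
              rcases lt_or_eq_of_le hcx with h | h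
              · exact absurd h this
              · exact h.ge)
            exact Or.inr (hxlt.le.trans hcx'.symm.le)
        · exact Or.inr (hxlt.le.trans hxc)
end Main

/-- If `φ` is a closure operator on a finite poset `P` (a monotone map with
`φ ∘ φ = φ`), then the order complex of `P` LC-reduces to the order complex of
the image `φ(P)`. -/
theorem stmt_18 {P : Type} [Fintype P] [DecidableEq P] [PartialOrder P]
    (φ : P → P) (hord : Monotone φ) (hmono : ∀ x : P, x ≤ φ x ∨ φ x ≤ x)
    (hidem : φ ∘ φ = φ) :
    LCReduces (orderCpx (Finset.univ : Finset P))
      (orderCpx ((Finset.univ : Finset P).image φ)) := by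
  have hid : ∀ x, φ (φ x) = φ x := fun x => congrFun hidem x
  have himg : (Finset.univ : Finset P).image φ = Finset.univ.filter fun p => φ p = p := by
    ext p
    simp only [Finset.mem_image, Finset.mem_univ, true_and, Finset.mem_filter]
    constructor
    · rintro ⟨a, rfl⟩; exact hid a
    · intro h; exact ⟨p, h⟩
  rw [himg]
  exact main_reduce φ hord hmono hid (Finset.univ.card) Finset.univ le_rfl (Finset.filter_subset _ _)
end
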